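/- arXiv:math-ph/0412093 — 2 statements merged into one kernel-verified Lean document; each statement's English description precedes it below -/
import Mathlib

section
/- Let σ : N → M be a unital linear map between C*-algebras satisfying the Schwarz inequality σ(x)*σ(x) ≤ σ(x*x) for all x. If a ∈ N satisfies σ(a*a) = σ(a)*σ(a) and σ(aa*) = σ(a)σ(a)*, then σ(ab) = σ(a)σ(b) and σ(ba) = σ(b)σ(a) for every b ∈ N. -/
open scoped ComplexConjugate

/-- Key lemma: if `σ(a*a) = σ(a)*σ(a)` then `a` is in the (left) multiplicative domain. -/
lemma key_mult_domain {N M : Type*} [CStarAlgebra N] [CStarAlgebra M]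
    [PartialOrder M] [StarOrderedRing M]
    (σ : N →ₗ[ℂ] M)
    (hSchwarz : ∀ x : N, star (σ x) * σ x ≤ σ (star x * x))
    (a : N) (h₁ : σ (star a * a) = star (σ a) * σ a) (b : N) :
    σ (star a * b) = star (σ a) * σ b ∧ σ (star b * a) = star (σ b) * σ a := by
  set Dab : M := σ (star a * b) - star (σ a) * σ b with hDab
  set Dba : M := σ (star b * a) - star (σ b) * σ a with hDba
  set Dbb : M := σ (star b * b) - star (σ b) * σ b with hDbb
  have hDbb0 : 0 ≤ Dbb := sub_nonneg.2 (hSchwarz b)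
  have expand : ∀ l : ℂ, 0 ≤ l • Dab + (conj l) • Dba + ((conj l) * l) • Dbb := by
    intro l
    have h := sub_nonneg.2 (hSchwarz (a + l • b))
    have e : σ (star (a + l • b) * (a + l • b)) - star (σ (a + l • b)) * σ (a + l • b)
        = l • Dab + (conj l) • Dba + ((conj l) * l) • Dbb := by
      simp only [star_add, star_smul, add_mul, mul_add, smul_mul_assoc, mul_smul_comm,
        smul_smul, map_add, map_smul, hDab, hDba, hDbb, h₁, RCLike.star_def]
      ring_nf
      module
    rwa [e] at h
  -- bounds for the "real part" S and "imaginary part" T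
  have bound : ∀ S : M, (∀ t : ℝ, 0 < t → 0 ≤ (t : ℂ) • S + ((t:ℂ)^2) • Dbb ∧
      (t : ℂ) • S + ((t:ℂ)^2) • Dbb ≤ ((2:ℂ) * (t:ℂ)^2) • Dbb) → S = 0 := by
    intro S hS
    have hnorm : ∀ t : ℝ, 0 < t → ‖S‖ ≤ 3 * t * ‖Dbb‖ := by
      intro t ht
      obtain ⟨h1, h2⟩ := hS t ht
      have h3 : ‖(t : ℂ) • S + ((t:ℂ)^2) • Dbb‖ ≤ ‖((2:ℂ) * (t:ℂ)^2) • Dbb‖ :=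
        CStarAlgebra.norm_le_norm_of_nonneg_of_le h1 h2
      have h4 : ‖(t : ℂ) • S‖ ≤ ‖(t : ℂ) • S + ((t:ℂ)^2) • Dbb‖ + ‖((t:ℂ)^2) • Dbb‖ := by
        have := norm_sub_le ((t : ℂ) • S + ((t:ℂ)^2) • Dbb) (((t:ℂ)^2) • Dbb)
        simpa using this
      have e1 : ‖(t : ℂ) • S‖ = t * ‖S‖ := by
        rw [norm_smul]; simp [abs_of_pos ht]
      have e2 : ‖((2:ℂ) * (t:ℂ)^2) • Dbb‖ = 2 * t^2 * ‖Dbb‖ := by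
        rw [norm_smul]; simp [abs_of_nonneg (sq_nonneg t), sq_abs]
      have e3 : ‖((t:ℂ)^2) • Dbb‖ = t^2 * ‖Dbb‖ := by
        rw [norm_smul]; simp [abs_of_nonneg (sq_nonneg t), sq_abs]
      rw [e2] at h3
      rw [e1, e3] at h4
      nlinarith [norm_nonneg S, norm_nonneg Dbb]
    have : ‖S‖ ≤ 0 := by
      by_contra hc
      push_neg at hc
      have ht : 0 < ‖S‖ / (6 * ‖Dbb‖ + 1) := by positivity
      have hle := hnorm _ ht
      have hD : 0 ≤ ‖Dbb‖ := norm_nonneg _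
      have hpos : (0:ℝ) < 6 * ‖Dbb‖ + 1 := by positivity
      have hq : ‖S‖ = (‖S‖ / (6 * ‖Dbb‖ + 1)) * (6 * ‖Dbb‖ + 1) :=
        (div_mul_cancel₀ _ hpos.ne').symm
      nlinarith [ht, hD, hle, hq]
    exact norm_le_zero_iff.mp this
  have hS : Dab + Dba = 0 := by
    apply bound
    intro t ht
    constructor
    · have h := expand (t : ℂ)
      simp only [Complex.conj_ofReal] at h
      convert h using 1
      simp only [smul_add]
      module
    · rw [← sub_nonneg]
      have h := expand (-(t : ℂ))
      simp only [map_neg, Complex.conj_ofReal] at h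
      convert h using 1
      simp only [smul_add]
      module
  have hT : (Complex.I) • Dab + (-Complex.I) • Dba = 0 := by
    apply bound
    intro t ht
    have cI : conj ((t:ℂ) * Complex.I) = -((t:ℂ) * Complex.I) := by
      simp [Complex.conj_ofReal]
    have mI : (-((t:ℂ) * Complex.I)) * ((t:ℂ) * Complex.I) = (t:ℂ)^2 := by
      calc (-((t:ℂ) * Complex.I)) * ((t:ℂ) * Complex.I)
          = -((t:ℂ)^2 * Complex.I^2) := by ring
        _ = (t:ℂ)^2 := by rw [Complex.I_sq]; ring
    constructor
    · have h := expand ((t:ℂ) * Complex.I)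
      rw [cI, mI] at h
      convert h using 1
      simp only [smul_add, smul_smul]
      module
    · rw [← sub_nonneg]
      have h := expand (-((t:ℂ) * Complex.I))
      rw [map_neg, cI, neg_neg, show ((t:ℂ) * Complex.I) * (-((t:ℂ) * Complex.I)) = (t:ℂ)^2 from by rw [mul_comm]; exact mI] at h
      convert h using 1
      simp only [smul_add, smul_smul]
      module
  have hab : Dab = 0 := by
    have e1 : (-Complex.I) * Complex.I = 1 := by
      simp [Complex.I_mul_I]
    have e2 : (-Complex.I) * (-Complex.I) = -1 := by
      simp [Complex.I_mul_I]
    have h2 : (2:ℂ) • Dab = (Dab + Dba) + (-Complex.I) • (Complex.I • Dab + (-Complex.I) • Dba) := by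
      simp only [smul_add, smul_smul, e1, e2, one_smul, neg_one_smul]
      module
    rw [hS, hT] at h2
    simp only [smul_zero, add_zero, zero_add] at h2
    rcases smul_eq_zero.mp h2 with h | h
    · norm_num at h
    · exact h
  have hba : Dba = 0 := by
    have : Dba = (Dab + Dba) - Dab := by abel
    rw [this, hS, hab]; simp
  constructor
  · have := hab; rw [hDab, sub_eq_zero] at this; exact this
  · have := hba; rw [hDba, sub_eq_zero] at this; exact this

/-- **Multiplicative domain property.**
Let `σ : N → M` be a unital linear map between C*-algebras satisfying the
Schwarz inequality `σ(x)* σ(x) ≤ σ(x* x)`.  If `a` satisfies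
`σ(a* a) = σ(a)* σ(a)` and `σ(a a*) = σ(a) σ(a)*`, then `σ(a b) = σ(a) σ(b)`
and `σ(b a) = σ(b) σ(a)` for every `b`. -/
theorem multiplicative_domain_mul {N M : Type*} [CStarAlgebra N] [CStarAlgebra M]
    [PartialOrder M] [StarOrderedRing M]
    (σ : N →ₗ[ℂ] M) (hunital : σ 1 = 1)
    (hSchwarz : ∀ x : N, star (σ x) * σ x ≤ σ (star x * x))
    (a : N) (h₁ : σ (star a * a) = star (σ a) * σ a)
    (h₂ : σ (a * star a) = σ a * star (σ a)) :
    ∀ b : N, σ (a * b) = σ a * σ b ∧ σ (b * a) = σ b * σ a := by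
  have hstar : ∀ x : N, σ (star x) = star (σ x) := by
    intro x
    have h := (key_mult_domain σ hSchwarz 1 (by simp [hunital]) x).2
    simpa [hunital] using h
  intro b
  constructor
  · have ha' : σ (star (star a) * star a) = star (σ (star a)) * σ (star a) := by
      rw [star_star, hstar a, star_star]
      exact h₂
    have h := (key_mult_domain σ hSchwarz (star a) ha' b).1
    rw [star_star] at h
    rw [h, hstar a, star_star]
  · have h := (key_mult_domain σ hSchwarz a h₁ (star b)).2
    rw [star_star] at h
    rw [h, hstar b, star_star]
end

section
/- Let M = M_n(ℂ) with faithful state ω of density e^H (H Hermitian), and let a₁, …, a_m be Hermitian elements of M. For θ ∈ ℝ^m define the exponential family φ_θ with density D_θ = exp(H + Σ_i θ_i a_i) / Tr exp(H + Σ_i θ_i a_i). If M₀ ⊆ M is a *-subalgebra containing e^{itH} a_j e^{-itH} for all real t and all j, then D_θ^{it} D_ω^{-it} ∈ M₀ for all real t and all θ (i.e., M₀ is sufficient for the exponential family). -/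
/-!
Write `X = it(H + Σ θ_j a_j)` and `Y = itH`. The interaction-picture cocycle
`u(s) = exp(sX) exp(-sY)` solves `u' = u B` with `B(s) = exp(sY) (X - Y) exp(-sY)`, a complex
combination of the `exp(itH) a_j exp(-itH)`, hence `B(s) ∈ M₀`. Since `M₀` is a subalgebra, right
multiplication by `B(s)` descends to the normed quotient `Mₙ(ℂ) ⧸ M₀`, so the image of `u` there
solves a linear ODE with initial value the image of `u(0) = 1`, which is `0`. By Grönwall it stays
`0`, i.e. `u(1) ∈ M₀` (a finite-dimensional, hence closed, subspace).
-/

open NormedSpace Set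

theorem Subalgebra.norm_mk_mul_le {R A : Type*} [CommRing R] [SeminormedRing A] [Algebra R A]
    (S : Subalgebra R A) (x : A) {b : A} (hb : b ∈ S) :
    ‖(Submodule.Quotient.mk (x * b) : A ⧸ Subalgebra.toSubmodule S)‖ ≤
      ‖(Submodule.Quotient.mk x : A ⧸ Subalgebra.toSubmodule S)‖ * ‖b‖ := by
  rcases (norm_nonneg b).eq_or_lt with hb0 | hb0
  · calc _ ≤ ‖x * b‖ := Submodule.Quotient.norm_mk_le _ _
      _ ≤ ‖x‖ * ‖b‖ := norm_mul_le _ _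
      _ = _ := by rw [← hb0, mul_zero, mul_zero]
  rw [← div_le_iff₀ hb0]
  refine QuotientAddGroup.le_norm_iff.2 fun x' hx' => ?_
  rw [div_le_iff₀ hb0]
  have hmk : (Submodule.Quotient.mk (x * b) : A ⧸ Subalgebra.toSubmodule S) =
      Submodule.Quotient.mk (x' * b) := by
    rw [Submodule.Quotient.eq, ← sub_mul, Subalgebra.mem_toSubmodule]
    exact mul_mem ((Submodule.Quotient.eq _).1 hx'.symm) hb
  calc _ = ‖(Submodule.Quotient.mk (x' * b) : A ⧸ Subalgebra.toSubmodule S)‖ := by rw [hmk]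
    _ ≤ ‖x' * b‖ := Submodule.Quotient.norm_mk_le _ _
    _ ≤ ‖x'‖ * ‖b‖ := norm_mul_le _ _

theorem Subalgebra.mem_of_hasDerivAt_eq_mul {A : Type*} [NormedRing A] [NormedAlgebra ℝ A]
    (S : Subalgebra ℝ A) (hS : IsClosed (S : Set A)) {f B : ℝ → A}
    (hf : ∀ s, HasDerivAt f (f s * B s) s) (hB : Continuous B) (hBS : ∀ s, B s ∈ S)
    (h0 : f 0 ∈ S) {t : ℝ} (ht : 0 ≤ t) : f t ∈ S := by
  set T := Subalgebra.toSubmodule S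
  have : IsClosed (T : Set A) := hS
  obtain ⟨K, hK⟩ := (isCompact_Icc (a := 0) (b := t)).exists_bound_of_continuousOn hB.continuousOn
  have hy : ∀ s, HasDerivAt (fun s => T.mkQL (f s)) (T.mkQL (f s * B s)) s := fun s =>
    T.mkQL.hasFDerivAt.comp_hasDerivAt s (hf s)
  have hyt := eq_zero_of_abs_deriv_le_mul_abs_self_of_eq_zero_right (K := K)
    (fun s _ => (hy s).continuousAt.continuousWithinAt) (fun s _ => (hy s).hasDerivWithinAt)
    (by simpa [T] using h0) (fun s hs => ?_) t ⟨ht, le_rfl⟩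
  · simpa [T] using hyt
  calc _ ≤ ‖T.mkQL (f s)‖ * ‖B s‖ := S.norm_mk_mul_le _ (hBS s)
    _ ≤ ‖T.mkQL (f s)‖ * K := by gcongr; exact hK s (Ico_subset_Icc_self hs)
    _ = _ := mul_comm _ _

section ExpCocycle

variable {A : Type*} [NormedRing A] [NormedAlgebra ℝ A] [CompleteSpace A]

theorem continuous_exp_smul (Y : A) : Continuous fun s : ℝ => exp (s • Y) :=
  continuous_iff_continuousAt.2 fun s => (hasDerivAt_exp_smul_const Y s).continuousAt

theorem hasDerivAt_exp_smul_mul_exp_neg_smul (X Y : A) (s : ℝ) :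
    HasDerivAt (fun s : ℝ => exp (s • X) * exp (-(s • Y)))
      (exp (s • X) * exp (-(s • Y)) * (exp (s • Y) * (X - Y) * exp (-(s • Y)))) s := by
  simp_rw [← smul_neg]
  let +nondep : NormedAlgebra ℚ A := NormedAlgebra.restrictScalars ℚ ℝ A
  have hinv : exp (s • -Y) * exp (s • Y) = 1 := by
    rw [← exp_add_of_commute (((Commute.refl Y).neg_left.smul_left s).smul_right s),
      ← smul_add, neg_add_cancel, smul_zero, exp_zero]
  refine ((hasDerivAt_exp_smul_const X s).mul
    (hasDerivAt_exp_smul_const' (-Y) s)).congr_deriv ?_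
  rw [mul_assoc (exp (s • X)) (exp (s • -Y)), ← mul_assoc (exp (s • -Y)),
    ← mul_assoc (exp (s • -Y)), hinv, one_mul]
  noncomm_ring

theorem Subalgebra.exp_mul_exp_neg_mem (S : Subalgebra ℝ A) (hS : IsClosed (S : Set A))
    {X Y : A} (h : ∀ s : ℝ, exp (s • Y) * (X - Y) * exp (-(s • Y)) ∈ S) :
    exp X * exp (-Y) ∈ S := by
  have hB : Continuous fun s : ℝ => exp (s • Y) * (X - Y) * exp (-(s • Y)) := by
    simp_rw [← smul_neg]
    exact ((continuous_exp_smul Y).mul continuous_const).mul (continuous_exp_smul (-Y))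
  simpa using S.mem_of_hasDerivAt_eq_mul hS (hasDerivAt_exp_smul_mul_exp_neg_smul X Y) hB h
    (by simp [S.one_mem]) zero_le_one

end ExpCocycle

theorem exponential_family_sufficiency_general {n m : ℕ}
    (H : Matrix (Fin n) (Fin n) ℂ)
    (a : Fin m → Matrix (Fin n) (Fin n) ℂ)
    (M₀ : StarSubalgebra ℂ (Matrix (Fin n) (Fin n) ℂ))
    (hM₀ : ∀ (t : ℝ) (j : Fin m),
      NormedSpace.exp ((Complex.I * (t : ℂ)) • H) * a j *
        NormedSpace.exp ((-(Complex.I * (t : ℂ))) • H) ∈ M₀) :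
    ∀ (θ : Fin m → ℝ) (t : ℝ),
      ((NormedSpace.exp (H + ∑ j, (θ j : ℂ) • a j)).trace ^
          (-(Complex.I * (t : ℂ)))) •
        (NormedSpace.exp ((Complex.I * (t : ℂ)) • (H + ∑ j, (θ j : ℂ) • a j)) *
          NormedSpace.exp ((-(Complex.I * (t : ℂ))) • H)) ∈ M₀ := by
  open scoped Matrix.Norms.Operator in
  intro θ t
  refine M₀.smul_mem ?_ _
  let S := M₀.toSubalgebra.restrictScalars ℝ
  have hS : IsClosed (S : Set (Matrix (Fin n) (Fin n) ℂ)) :=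
    (Subalgebra.toSubmodule M₀.toSubalgebra).closed_of_finiteDimensional
  rw [neg_smul]
  refine S.exp_mul_exp_neg_mem hS fun s => ?_
  have hs : s • (Complex.I * t) • H = (Complex.I * ((s * t : ℝ) : ℂ)) • H := by
    rw [← Complex.coe_smul, smul_smul]; push_cast; ring_nf
  rw [hs, ← smul_sub, add_sub_cancel_left, ← neg_smul, Subalgebra.mem_restrictScalars,
    StarSubalgebra.mem_toSubalgebra, mul_smul_comm, smul_mul_assoc, Finset.mul_sum,
    Finset.sum_mul]
  refine M₀.smul_mem (sum_mem fun j _ => ?_) _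
  rw [mul_smul_comm, smul_mul_assoc]
  exact M₀.smul_mem (hM₀ (s * t) j) _

/-- **Sufficiency for quantum exponential families.**
Let `ω` have density `e^H` and let `φ_θ` have density
`D_θ = exp(H + Σ_i θ_i a_i)/Z(θ)`.  If `M₀` contains `e^{itH} a_j e^{-itH}`
for all real `t` and all `j`, then the Connes cocycle
`D_θ^{it} D_ω^{-it} = Z(θ)^{-it} exp(it(H + Σ_j θ_j a_j)) exp(-itH)`
belongs to `M₀` for all `t` and `θ`, i.e. `M₀` is sufficient for the
exponential family. -/
theorem exponential_family_sufficiency {n m : ℕ}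
    (H : Matrix (Fin n) (Fin n) ℂ) (hH : H.IsHermitian)
    (a : Fin m → Matrix (Fin n) (Fin n) ℂ) (ha : ∀ j, (a j).IsHermitian)
    (M₀ : StarSubalgebra ℂ (Matrix (Fin n) (Fin n) ℂ))
    (hM₀ : ∀ (t : ℝ) (j : Fin m),
      NormedSpace.exp ((Complex.I * (t : ℂ)) • H) * a j *
        NormedSpace.exp ((-(Complex.I * (t : ℂ))) • H) ∈ M₀) :
    ∀ (θ : Fin m → ℝ) (t : ℝ),
      ((NormedSpace.exp (H + ∑ j, (θ j : ℂ) • a j)).trace ^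
          (-(Complex.I * (t : ℂ)))) •
        (NormedSpace.exp ((Complex.I * (t : ℂ)) • (H + ∑ j, (θ j : ℂ) • a j)) *
          NormedSpace.exp ((-(Complex.I * (t : ℂ))) • H)) ∈ M₀ :=
  exponential_family_sufficiency_general H a M₀ hM₀
end
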